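/- Let α, β, γ > 0 with αβγ = 1. Then the quadratic form Q_{α,β,γ}(ξ) = ξ₁₁² + ξ₂₂² + ξ₃₃² − 2ξ₁₁ξ₂₂ − 2ξ₂₂ξ₃₃ − 2ξ₃₃ξ₁₁ + α ξ₁₂² + β ξ₂₃² + γ ξ₃₁² is quasiconvex: Q_{α,β,γ}(x ⊗ y) ≥ 0 for all x, y ∈ ℝ³. -/
import Mathlib


/-- The tensor (outer) product of two vectors in ℝ³, as a 3×3 matrix. -/
def outer (x y : Fin 3 → ℝ) : Matrix (Fin 3) (Fin 3) ℝ :=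
  fun i j => x i * y j

/-- The quadratic form `Q_{α,β,γ}(ξ) = ξ₁₁² + ξ₂₂² + ξ₃₃² − 2ξ₁₁ξ₂₂ − 2ξ₂₂ξ₃₃ − 2ξ₃₃ξ₁₁
+ α ξ₁₂² + β ξ₂₃² + γ ξ₃₁²`. -/
def Qgen (α β γ : ℝ) (ξ : Matrix (Fin 3) (Fin 3) ℝ) : ℝ :=
  ξ 0 0 ^ 2 + ξ 1 1 ^ 2 + ξ 2 2 ^ 2
    - 2 * ξ 0 0 * ξ 1 1 - 2 * ξ 1 1 * ξ 2 2 - 2 * ξ 2 2 * ξ 0 0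
    + α * ξ 0 1 ^ 2 + β * ξ 1 2 ^ 2 + γ * ξ 2 0 ^ 2

/-- Schur's inequality for `t = 1`. -/
lemma Qgen_aux_schur1 (x y z : ℝ) (hx : 0 ≤ x) (hy : 0 ≤ y) (hz : 0 ≤ z) :
    x*y*(x+y) + y*z*(y+z) + z*x*(z+x) ≤ x^3 + y^3 + z^3 + 3*(x*y*z) := by
  rcases le_total x y with h1 | h1 <;> rcases le_total y z with h2 | h2 <;>
    rcases le_total x z with h3 | h3 <;>
  nlinarith [mul_nonneg (mul_nonneg hx (sub_nonneg.2 h1)) (sub_nonneg.2 h3),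
    mul_nonneg (mul_nonneg hy (sub_nonneg.2 h1)) (sub_nonneg.2 h2),
    mul_nonneg (mul_nonneg hz (sub_nonneg.2 h2)) (sub_nonneg.2 h3),
    mul_nonneg (sq_nonneg (x-y)) hx, mul_nonneg (sq_nonneg (x-y)) hy,
    mul_nonneg (sq_nonneg (y-z)) hy, mul_nonneg (sq_nonneg (y-z)) hz,
    mul_nonneg (sq_nonneg (x-z)) hx, mul_nonneg (sq_nonneg (x-z)) hz,
    mul_nonneg (sq_nonneg (x-y)) hz, mul_nonneg (sq_nonneg (y-z)) hx,
    mul_nonneg (sq_nonneg (x-z)) hy]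

/-- Schur plus AM–GM, in sixth powers. -/
lemma Qgen_aux_schur6 (A B C : ℝ) :
    2*(A^3*B^3 + B^3*C^3 + C^3*A^3) ≤ A^6 + B^6 + C^6 + 3*(A*B*C)^2 := by
  have h := Qgen_aux_schur1 (A^2) (B^2) (C^2) (sq_nonneg A) (sq_nonneg B) (sq_nonneg C)
  nlinarith [mul_nonneg (mul_nonneg (sq_nonneg A) (sq_nonneg B)) (sq_nonneg (A-B)),
    mul_nonneg (mul_nonneg (sq_nonneg B) (sq_nonneg C)) (sq_nonneg (B-C)),
    mul_nonneg (mul_nonneg (sq_nonneg A) (sq_nonneg C)) (sq_nonneg (A-C))]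

/-- AM–GM for three nonnegative reals, cube-root form. -/
lemma Qgen_aux_amgm3 (X Y Z : ℝ) (hX : 0 ≤ X) (hY : 0 ≤ Y) (hZ : 0 ≤ Z) :
    3 * (X*Y*Z) ^ ((3:ℝ)⁻¹) ≤ X + Y + Z := by
  set A := X ^ ((3:ℝ)⁻¹) with hAdef
  set B := Y ^ ((3:ℝ)⁻¹) with hBdef
  set C := Z ^ ((3:ℝ)⁻¹) with hCdef
  have hA : 0 ≤ A := Real.rpow_nonneg hX _
  have hB : 0 ≤ B := Real.rpow_nonneg hY _
  have hC : 0 ≤ C := Real.rpow_nonneg hZ _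
  have hA3 : A ^ 3 = X := by rw [hAdef, ← Real.rpow_natCast (X ^ _), ← Real.rpow_mul hX]; norm_num
  have hB3 : B ^ 3 = Y := by rw [hBdef, ← Real.rpow_natCast (Y ^ _), ← Real.rpow_mul hY]; norm_num
  have hC3 : C ^ 3 = Z := by rw [hCdef, ← Real.rpow_natCast (Z ^ _), ← Real.rpow_mul hZ]; norm_num
  have hprod : (X*Y*Z) ^ ((3:ℝ)⁻¹) = A*B*C := by
    rw [Real.mul_rpow (by positivity) hZ, Real.mul_rpow hX hY]
  rw [hprod, ← hA3, ← hB3, ← hC3]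
  nlinarith [sq_nonneg (A-B), sq_nonneg (B-C), sq_nonneg (A-C), add_nonneg (add_nonneg hA hB) hC,
    mul_nonneg hA hB, mul_nonneg hB hC, mul_nonneg hA hC]

/-- The key scalar inequality for nonnegative reals. -/
lemma Qgen_aux_key_nonneg (a b c : ℝ) (ha : 0 ≤ a) (hb : 0 ≤ b) (hc : 0 ≤ c) :
    2*(a*b + b*c + c*a) ≤ a^2 + b^2 + c^2 + 3 * ((a*b*c)^2) ^ ((3:ℝ)⁻¹) := by
  set A := a ^ ((3:ℝ)⁻¹) with hAdef
  set B := b ^ ((3:ℝ)⁻¹) with hBdef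
  set C := c ^ ((3:ℝ)⁻¹) with hCdef
  have hA3 : A ^ 3 = a := by rw [hAdef, ← Real.rpow_natCast (a ^ _), ← Real.rpow_mul ha]; norm_num
  have hB3 : B ^ 3 = b := by rw [hBdef, ← Real.rpow_natCast (b ^ _), ← Real.rpow_mul hb]; norm_num
  have hC3 : C ^ 3 = c := by rw [hCdef, ← Real.rpow_natCast (c ^ _), ← Real.rpow_mul hc]; norm_num
  have hcube : ((a*b*c)^2) ^ ((3:ℝ)⁻¹) = (A*B*C)^2 := by
    have : (a*b*c)^2 = ((A*B*C)^2)^3 := by rw [← hA3, ← hB3, ← hC3]; ring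
    rw [this, ← Real.rpow_natCast ((A*B*C)^2) 3, ← Real.rpow_mul (by positivity)]
    norm_num
  rw [hcube, ← hA3, ← hB3, ← hC3]
  nlinarith [Qgen_aux_schur6 A B C]

/-- The key scalar inequality for arbitrary reals. -/
lemma Qgen_aux_key (a b c : ℝ) :
    2*(a*b + b*c + c*a) ≤ a^2 + b^2 + c^2 + 3 * ((a*b*c)^2) ^ ((3:ℝ)⁻¹) := by
  have h := Qgen_aux_key_nonneg |a| |b| |c| (abs_nonneg a) (abs_nonneg b) (abs_nonneg c)
  have h1 : (|a| * |b| * |c|) ^ 2 = (a * b * c) ^ 2 := by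
    rw [← abs_mul, ← abs_mul, sq_abs]
  have h2 : a*b ≤ |a| * |b| := by rw [← abs_mul]; exact le_abs_self _
  have h3 : b*c ≤ |b| * |c| := by rw [← abs_mul]; exact le_abs_self _
  have h4 : c*a ≤ |c| * |a| := by rw [← abs_mul]; exact le_abs_self _
  rw [h1] at h
  rw [sq_abs, sq_abs, sq_abs] at h
  linarith

/-- for `α, β, γ > 0` with `αβγ = 1`, the quadratic form `Q_{α,β,γ}` is
quasiconvex: `Q_{α,β,γ}(x ⊗ y) ≥ 0` for all `x, y ∈ ℝ³`. -/
theorem Qgen_quasiconvex (α β γ : ℝ) (hα : 0 < α) (hβ : 0 < β) (hγ : 0 < γ)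
    (habc : α * β * γ = 1) :
    ∀ x y : Fin 3 → ℝ, 0 ≤ Qgen α β γ (outer x y) := by
  intro x y
  set a := x 0 * y 0 with hadef
  set b := x 1 * y 1 with hbdef
  set c := x 2 * y 2 with hcdef
  set p := x 0 * y 1 with hpdef
  set q := x 1 * y 2 with hqdef
  set r := x 2 * y 0 with hrdef
  have hQ : Qgen α β γ (outer x y)
      = a^2 + b^2 + c^2 - 2*a*b - 2*b*c - 2*c*a + α*p^2 + β*q^2 + γ*r^2 := by
    simp only [Qgen, outer, hadef, hbdef, hcdef, hpdef, hqdef, hrdef]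
  rw [hQ]
  have hamgm := Qgen_aux_amgm3 (α*p^2) (β*q^2) (γ*r^2) (by positivity) (by positivity)
    (by positivity)
  have hXYZ : α*p^2 * (β*q^2) * (γ*r^2) = (a*b*c)^2 := by
    have hpqr : p * q * r = a * b * c := by
      simp only [hpdef, hqdef, hrdef, hadef, hbdef, hcdef]; ring
    calc α*p^2 * (β*q^2) * (γ*r^2) = (α*β*γ) * (p*q*r)^2 := by ring
      _ = (a*b*c)^2 := by rw [habc, hpqr]; ring
  rw [hXYZ] at hamgm
  have hkey := Qgen_aux_key a b c
  linarith
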